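/- arXiv:2304.08075 — 2 statements merged into one kernel-verified Lean document; each statement's English description precedes it below -/
import Mathlib

section
/- Let ν be a measure on ℝ^d with ∫ max(‖η‖, ‖η‖²) ν(dη) < ∞ and support contained in [-m,∞)^d for some m ≥ 0. Then the function J(ξ) = ∫ (e^{-⟨ξ,η⟩} - 1 + ⟨ξ,η⟩) ν(dη) is well defined and twice continuously differentiable on (0, 1/m)^d, with bounded first-order partial derivatives on (0,1/m)^d, and J(0) = 0. -/
/-!
Write `κ t = e^{-t} - 1 + t` (`compensatedExp`), so that `J ξ = ∫ κ ⟪ξ, η⟫ dν`. For `ξ` in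
the box and `η` in `[-m, ∞)^d` every product `ξᵢ ηᵢ` is at least `-1`, hence `⟪ξ, η⟫ ≥ -d`.
On `[-d, ∞)` we have `|κ t| ≤ e^d |t|`, `|κ' t| ≤ e^d` and `|κ'' t| ≤ e^d`, so the integrand
and its first two derivatives in `ξ` are dominated by `e^d ‖ξ‖ ‖η‖`, `e^d ‖η‖` and `e^d ‖η‖²`,
all `ν`-integrable. Differentiation under the integral sign then gives the `C²` regularity and
the bound `‖DJ‖ ≤ e^d ∫ ‖η‖ dν`.
-/

open MeasureTheory Set RealInnerProductSpace

noncomputable def compensatedExp (t : ℝ) : ℝ := Real.exp (-t) - 1 + t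

lemma hasDerivAt_compensatedExp (t : ℝ) :
    HasDerivAt compensatedExp (1 - Real.exp (-t)) t :=
  (((hasDerivAt_neg t).exp.sub_const 1).add (hasDerivAt_id' t)).congr_deriv (by ring)

lemma hasDerivAt_one_sub_exp_neg (t : ℝ) :
    HasDerivAt (fun t => 1 - Real.exp (-t)) (Real.exp (-t)) t :=
  ((hasDerivAt_neg t).exp.const_sub 1).congr_deriv (by ring)

lemma compensatedExp_nonneg (t : ℝ) : 0 ≤ compensatedExp t := by
  unfold compensatedExp
  linarith [Real.add_one_le_exp (-t)]

lemma abs_compensatedExp_le {c t : ℝ} (hc : 0 ≤ c) (ht : -c ≤ t) :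
    |compensatedExp t| ≤ Real.exp c * |t| := by
  rw [abs_of_nonneg (compensatedExp_nonneg t)]
  unfold compensatedExp
  have hexp : Real.exp (-t) ≤ Real.exp c := Real.exp_le_exp.2 (by linarith)
  rcases le_or_gt 0 t with h | h
  · rw [abs_of_nonneg h]
    nlinarith [Real.exp_le_one_iff.2 (neg_nonpos.2 h), Real.one_le_exp hc]
  · have hmul : Real.exp (-t) * (1 + t) ≤ 1 := by
      rw [Real.exp_neg]
      exact inv_mul_le_one_of_le₀ (by linarith [Real.add_one_le_exp t]) (Real.exp_pos t).le
    rw [abs_of_neg h]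
    nlinarith

lemma abs_one_sub_exp_neg_le {c t : ℝ} (hc : 0 ≤ c) (ht : -c ≤ t) :
    |1 - Real.exp (-t)| ≤ Real.exp c := by
  have hexp : Real.exp (-t) ≤ Real.exp c := Real.exp_le_exp.2 (by linarith)
  rw [abs_le]
  constructor <;> linarith [Real.exp_pos (-t), Real.one_le_exp hc]

section InnerIntegrand

variable {E : Type*} [NormedAddCommGroup E] [InnerProductSpace ℝ E]

noncomputable def compensatedExpInnerDeriv (ξ η : E) : E →L[ℝ] ℝ :=
  (1 - Real.exp (-⟪ξ, η⟫)) • innerSL ℝ η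

noncomputable def compensatedExpInnerDeriv2 (ξ η : E) : E →L[ℝ] E →L[ℝ] ℝ :=
  (Real.exp (-⟪ξ, η⟫) • innerSL ℝ η).smulRight (innerSL ℝ η)

lemma hasFDerivAt_inner_const_right (ξ η : E) :
    HasFDerivAt (fun ξ : E => ⟪ξ, η⟫) (innerSL ℝ η) ξ := by
  have h : (fun ξ : E => ⟪ξ, η⟫) = innerSL ℝ η :=
    funext fun ξ => (real_inner_comm η ξ).trans (innerSL_apply_apply (𝕜 := ℝ) η ξ).symm
  exact h ▸ (innerSL ℝ η).hasFDerivAt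

lemma hasFDerivAt_compensatedExp_inner (ξ η : E) :
    HasFDerivAt (fun ξ => compensatedExp ⟪ξ, η⟫) (compensatedExpInnerDeriv ξ η) ξ :=
  (hasDerivAt_compensatedExp _).comp_hasFDerivAt ξ (hasFDerivAt_inner_const_right ξ η)

lemma hasFDerivAt_compensatedExpInnerDeriv (ξ η : E) :
    HasFDerivAt (compensatedExpInnerDeriv · η) (compensatedExpInnerDeriv2 ξ η) ξ :=
  ((hasDerivAt_one_sub_exp_neg _).comp_hasFDerivAt ξ
    (hasFDerivAt_inner_const_right ξ η)).smul_const (innerSL ℝ η)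

lemma continuous_compensatedExp_inner (ξ : E) : Continuous fun η => compensatedExp ⟪ξ, η⟫ := by
  unfold compensatedExp; fun_prop

lemma continuous_compensatedExpInnerDeriv (ξ : E) : Continuous (compensatedExpInnerDeriv ξ) := by
  unfold compensatedExpInnerDeriv; fun_prop

lemma continuous_compensatedExpInnerDeriv2 :
    Continuous (fun p : E × E => compensatedExpInnerDeriv2 p.1 p.2) := by
  have hinner : Continuous fun p : E × E => innerSL ℝ p.2 := by fun_prop
  exact isBoundedBilinearMap_smulRight.continuous.comp
    (((Real.continuous_exp.comp continuous_inner.neg).smul hinner).prodMk hinner)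

lemma continuous_compensatedExpInnerDeriv2_right (ξ : E) :
    Continuous (compensatedExpInnerDeriv2 ξ) :=
  continuous_compensatedExpInnerDeriv2.comp (.prodMk_right ξ)

lemma norm_compensatedExpInnerDeriv_le {c : ℝ} (hc : 0 ≤ c) {ξ η : E} (h : -c ≤ ⟪ξ, η⟫) :
    ‖compensatedExpInnerDeriv ξ η‖ ≤ Real.exp c * ‖η‖ := by
  rw [compensatedExpInnerDeriv, norm_smul, innerSL_apply_norm, Real.norm_eq_abs]
  gcongr
  exact abs_one_sub_exp_neg_le hc h

lemma norm_compensatedExpInnerDeriv2_le {c : ℝ} {ξ η : E} (h : -c ≤ ⟪ξ, η⟫) :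
    ‖compensatedExpInnerDeriv2 ξ η‖ ≤ Real.exp c * ‖η‖ ^ 2 := by
  rw [compensatedExpInnerDeriv2, ContinuousLinearMap.norm_smulRight_apply, norm_smul,
    innerSL_apply_norm, Real.norm_of_nonneg (Real.exp_pos _).le, pow_two, ← mul_assoc]
  gcongr
  linarith

end InnerIntegrand

section Integral

variable {E : Type*} [NormedAddCommGroup E] [InnerProductSpace ℝ E] [MeasurableSpace E]
  [BorelSpace E] {ν : Measure E} {U : Set E} {c : ℝ}

lemma integrable_compensatedExp_inner (hc : 0 ≤ c) (hlow : ∀ᵐ η ∂ν, ∀ ξ ∈ U, -c ≤ ⟪ξ, η⟫)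
    (h1 : Integrable (‖·‖) ν) {ξ : E} (hξ : ξ ∈ U) :
    Integrable (fun η => compensatedExp ⟪ξ, η⟫) ν := by
  refine (h1.const_mul (Real.exp c * ‖ξ‖)).mono'
    (continuous_compensatedExp_inner ξ).aestronglyMeasurable ?_
  filter_upwards [hlow] with η hη
  calc ‖compensatedExp ⟪ξ, η⟫‖ ≤ Real.exp c * |⟪ξ, η⟫| := abs_compensatedExp_le hc (hη ξ hξ)
    _ ≤ Real.exp c * (‖ξ‖ * ‖η‖) := by gcongr; exact abs_real_inner_le_norm ξ η
    _ = Real.exp c * ‖ξ‖ * ‖η‖ := by ring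

variable [FiniteDimensional ℝ E]

lemma hasFDerivAt_integral_compensatedExp_inner (hU : IsOpen U) (hc : 0 ≤ c)
    (hlow : ∀ᵐ η ∂ν, ∀ ξ ∈ U, -c ≤ ⟪ξ, η⟫) (h1 : Integrable (‖·‖) ν) {ξ : E} (hξ : ξ ∈ U) :
    HasFDerivAt (fun ξ => ∫ η, compensatedExp ⟪ξ, η⟫ ∂ν)
      (∫ η, compensatedExpInnerDeriv ξ η ∂ν) ξ :=
  hasFDerivAt_integral_of_dominated_of_fderiv_le (hU.mem_nhds hξ)
    (.of_forall fun ξ => (continuous_compensatedExp_inner ξ).aestronglyMeasurable)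
    (integrable_compensatedExp_inner hc hlow h1 hξ)
    (continuous_compensatedExpInnerDeriv ξ).aestronglyMeasurable
    (hlow.mono fun _ hη ξ hξ => norm_compensatedExpInnerDeriv_le hc (hη ξ hξ))
    (h1.const_mul _) (.of_forall fun η ξ _ => hasFDerivAt_compensatedExp_inner ξ η)

lemma hasFDerivAt_integral_compensatedExpInnerDeriv (hU : IsOpen U) (hc : 0 ≤ c)
    (hlow : ∀ᵐ η ∂ν, ∀ ξ ∈ U, -c ≤ ⟪ξ, η⟫) (h1 : Integrable (‖·‖) ν)
    (h2 : Integrable (‖·‖ ^ 2) ν) {ξ : E} (hξ : ξ ∈ U) :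
    HasFDerivAt (fun ξ => ∫ η, compensatedExpInnerDeriv ξ η ∂ν)
      (∫ η, compensatedExpInnerDeriv2 ξ η ∂ν) ξ := by
  have hmeas (ξ : E) : AEStronglyMeasurable (compensatedExpInnerDeriv ξ) ν :=
    (continuous_compensatedExpInnerDeriv ξ).aestronglyMeasurable
  refine hasFDerivAt_integral_of_dominated_of_fderiv_le (hU.mem_nhds hξ) (.of_forall hmeas)
    ((h1.const_mul (Real.exp c)).mono' (hmeas ξ) ?_)
    (continuous_compensatedExpInnerDeriv2_right ξ).aestronglyMeasurable
    (hlow.mono fun _ hη ξ hξ => norm_compensatedExpInnerDeriv2_le (hη ξ hξ))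
    (h2.const_mul _) (.of_forall fun η ξ _ => hasFDerivAt_compensatedExpInnerDeriv ξ η)
  exact hlow.mono fun _ hη => norm_compensatedExpInnerDeriv_le hc (hη ξ hξ)

lemma continuousOn_integral_compensatedExpInnerDeriv2 (hlow : ∀ᵐ η ∂ν, ∀ ξ ∈ U, -c ≤ ⟪ξ, η⟫)
    (h2 : Integrable (‖·‖ ^ 2) ν) :
    ContinuousOn (fun ξ => ∫ η, compensatedExpInnerDeriv2 ξ η ∂ν) U :=
  continuousOn_of_dominated
    (fun ξ _ => (continuous_compensatedExpInnerDeriv2_right ξ).aestronglyMeasurable)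
    (fun ξ hξ => hlow.mono fun _ hη => norm_compensatedExpInnerDeriv2_le (hη ξ hξ))
    (h2.const_mul (Real.exp c))
    (.of_forall fun η => (continuous_compensatedExpInnerDeriv2.comp (.prodMk_left η)).continuousOn)

lemma contDiffOn_integral_compensatedExp_inner (hU : IsOpen U) (hc : 0 ≤ c)
    (hlow : ∀ᵐ η ∂ν, ∀ ξ ∈ U, -c ≤ ⟪ξ, η⟫) (h1 : Integrable (‖·‖) ν)
    (h2 : Integrable (‖·‖ ^ 2) ν) :
    ContDiffOn ℝ 2 (fun ξ => ∫ η, compensatedExp ⟪ξ, η⟫ ∂ν) U := by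
  have hD1 : ContDiffOn ℝ 1 (fun ξ => ∫ η, compensatedExpInnerDeriv ξ η ∂ν) U :=
    (contDiffOn_succ_iff_hasFDerivWithinAt_of_uniqueDiffOn (n := 0) hU.uniqueDiffOn).2
      ⟨by simp, _, contDiffOn_zero.2 (continuousOn_integral_compensatedExpInnerDeriv2 hlow h2),
        fun ξ hξ => (hasFDerivAt_integral_compensatedExpInnerDeriv hU hc hlow h1 h2
          hξ).hasFDerivWithinAt⟩
  exact (contDiffOn_succ_iff_hasFDerivWithinAt_of_uniqueDiffOn (n := 1) hU.uniqueDiffOn).2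
    ⟨by simp, _, hD1, fun ξ hξ =>
      (hasFDerivAt_integral_compensatedExp_inner hU hc hlow h1 hξ).hasFDerivWithinAt⟩

lemma norm_fderiv_integral_compensatedExp_inner_le (hU : IsOpen U) (hc : 0 ≤ c)
    (hlow : ∀ᵐ η ∂ν, ∀ ξ ∈ U, -c ≤ ⟪ξ, η⟫) (h1 : Integrable (‖·‖) ν) {ξ : E} (hξ : ξ ∈ U) :
    ‖fderiv ℝ (fun ξ => ∫ η, compensatedExp ⟪ξ, η⟫ ∂ν) ξ‖ ≤ Real.exp c * ∫ η, ‖η‖ ∂ν := by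
  rw [(hasFDerivAt_integral_compensatedExp_inner hU hc hlow h1 hξ).fderiv, ← integral_const_mul]
  exact norm_integral_le_of_norm_le (h1.const_mul _)
    (hlow.mono fun _ hη => norm_compensatedExpInnerDeriv_le hc (hη ξ hξ))

end Integral

lemma neg_one_le_mul_of_mem_box {m x y : ℝ} (hx₀ : 0 < x) (hx : m ≠ 0 → x < 1 / m)
    (hy : -m ≤ y) : -1 ≤ x * y := by
  rcases lt_trichotomy m 0 with hm | rfl | hm
  · linarith [hx hm.ne, one_div_neg.2 hm]
  · nlinarith
  · have : x * m < 1 := (lt_div_iff₀ hm).1 (hx hm.ne')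
    nlinarith

lemma neg_card_le_inner_of_mem_box {d : ℕ} {m : ℝ} {ξ η : EuclideanSpace ℝ (Fin d)}
    (hξ : ∀ i, 0 < ξ i ∧ (m ≠ 0 → ξ i < 1 / m)) (hη : ∀ i, -m ≤ η i) :
    -(d : ℝ) ≤ ⟪ξ, η⟫ := by
  calc -(d : ℝ) = ∑ _i : Fin d, (-1 : ℝ) := by simp
    _ ≤ ∑ i, ξ i * η i :=
      Finset.sum_le_sum fun i _ => neg_one_le_mul_of_mem_box (hξ i).1 (hξ i).2 (hη i)
    _ = ⟪ξ, η⟫ := by simp [PiLp.inner_apply, mul_comm]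

lemma isOpen_box {d : ℕ} (m : ℝ) :
    IsOpen {ξ : EuclideanSpace ℝ (Fin d) | ∀ i, 0 < ξ i ∧ (m ≠ 0 → ξ i < 1 / m)} := by
  have hI : IsOpen {x : ℝ | 0 < x ∧ (m ≠ 0 → x < 1 / m)} := by
    rcases eq_or_ne m 0 with rfl | hm
    · simpa using isOpen_lt continuous_const continuous_id
    · simpa [hm] using
        (isOpen_lt continuous_const continuous_id).and (isOpen_lt continuous_id continuous_const)
  have := isOpen_iInter_of_finite fun i : Fin d =>
    hI.preimage (EuclideanSpace.proj (𝕜 := ℝ) i).continuous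
  convert this using 1
  ext
  simp

theorem stmt_1_general {d : ℕ} (ν : Measure (EuclideanSpace ℝ (Fin d))) (m : ℝ)
    (hint : Integrable (fun η : EuclideanSpace ℝ (Fin d) => max ‖η‖ (‖η‖ ^ 2)) ν)
    (hsupp : ∀ᵐ η ∂ν, ∀ i : Fin d, -m ≤ η i)
    (J : EuclideanSpace ℝ (Fin d) → ℝ)
    (hJ : ∀ ξ, J ξ = ∫ η, (Real.exp (-⟪ξ, η⟫) - 1 + ⟪ξ, η⟫) ∂ν)
    (S : Set (EuclideanSpace ℝ (Fin d)))
    (hS : S = {ξ | ∀ i : Fin d, 0 < ξ i ∧ (m ≠ 0 → ξ i < 1 / m)}) :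
    (∀ ξ ∈ S, Integrable (fun η => Real.exp (-⟪ξ, η⟫) - 1 + ⟪ξ, η⟫) ν) ∧
    ContDiffOn ℝ 2 J S ∧
    (∃ C : ℝ, ∀ ξ ∈ S, ‖fderiv ℝ J ξ‖ ≤ C) ∧
    J 0 = 0 := by
  have hd : (0 : ℝ) ≤ d := d.cast_nonneg
  have hU : IsOpen S := hS ▸ isOpen_box m
  have hlow : ∀ᵐ η ∂ν, ∀ ξ ∈ S, -(d : ℝ) ≤ ⟪ξ, η⟫ := by
    filter_upwards [hsupp] with η hη ξ hξ
    rw [hS] at hξ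
    exact neg_card_le_inner_of_mem_box hξ hη
  have h1 : Integrable (‖·‖) ν :=
    hint.mono' (by fun_prop) (.of_forall fun η => by simp)
  have h2 : Integrable (‖·‖ ^ 2) ν :=
    hint.mono' (by fun_prop) (.of_forall fun η => by simp)
  obtain rfl : J = fun ξ => ∫ η, compensatedExp ⟪ξ, η⟫ ∂ν := funext hJ
  exact ⟨fun ξ hξ => integrable_compensatedExp_inner hd hlow h1 hξ,
    contDiffOn_integral_compensatedExp_inner hU hd hlow h1 h2,
    ⟨_, fun ξ hξ => norm_fderiv_integral_compensatedExp_inner_le hU hd hlow h1 hξ⟩,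
    by simp [compensatedExp]⟩

/-- if `ν` has `∫ max(‖η‖,‖η‖²) dν < ∞` and is concentrated on `[-m,∞)^d`
(`m ≥ 0`), then `J ξ = ∫ (e^{-⟪ξ,η⟫} - 1 + ⟪ξ,η⟫) dν` is well defined and `C²` on the
open box `(0, 1/m)^d` (with `1/m = ∞` when `m = 0`), has bounded first-order derivative
there, and `J 0 = 0`. -/
theorem stmt_1 {d : ℕ} (ν : Measure (EuclideanSpace ℝ (Fin d))) (m : ℝ) (hm : 0 ≤ m)
    (hint : Integrable (fun η : EuclideanSpace ℝ (Fin d) => max ‖η‖ (‖η‖ ^ 2)) ν)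
    (hsupp : ∀ᵐ η ∂ν, ∀ i : Fin d, -m ≤ η i)
    (J : EuclideanSpace ℝ (Fin d) → ℝ)
    (hJ : ∀ ξ, J ξ = ∫ η, (Real.exp (-⟪ξ, η⟫) - 1 + ⟪ξ, η⟫) ∂ν)
    (S : Set (EuclideanSpace ℝ (Fin d)))
    (hS : S = {ξ | ∀ i : Fin d, 0 < ξ i ∧ (m ≠ 0 → ξ i < 1 / m)}) :
    (∀ ξ ∈ S, Integrable (fun η => Real.exp (-⟪ξ, η⟫) - 1 + ⟪ξ, η⟫) ν) ∧
    ContDiffOn ℝ 2 J S ∧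
    (∃ C : ℝ, ∀ ξ ∈ S, ‖fderiv ℝ J ξ‖ ≤ C) ∧
    J 0 = 0 :=
  stmt_1_general ν m hint hsupp J hJ S hS
end

section
/- Deterministic Morton-type blow-up: let f(0,·) ∈ C([0,T*]) with f(0,v) ≥ K for v ∈ [t,S] where 0 < t < S ≤ T*. Define η(s,S) = (∫_s^S f(0,v)dv)^{-1} − s/2 for 0 ≤ s ≤ t (the deterministic case M ≡ 1, g ≡ 1). If K > 2/(t(S−t)), then there exists s ∈ (0,t] with η(s,S) ≤ 0; hence the explicit solution formula for the forward rate f(·,S) blows up before time t. -/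
open Set intervalIntegral

/-! Blow-up is already visible at `s = t`: the lower bound `f₀ ≥ K` on `[t, S]` gives
`∫_t^S f₀ ≥ K (S - t)`, and `K > 2 / (t (S - t))` makes the reciprocal of this smaller than
`t / 2`, so `η t < 0`. -/

theorem mul_sub_le_integral_of_le_on {f : ℝ → ℝ} {a b K : ℝ} (hab : a ≤ b)
    (hf : IntervalIntegrable f MeasureTheory.volume a b) (hK : ∀ v ∈ Icc a b, K ≤ f v) :
    K * (b - a) ≤ ∫ v in a..b, f v := by
  simpa [mul_comm] using integral_mono_on hab intervalIntegrable_const hf hK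

theorem inv_lt_half_of_mul_le {t L K I : ℝ} (ht : 0 < t) (hL : 0 < L)
    (hK : 2 / (t * L) < K) (hI : K * L ≤ I) : I⁻¹ < t / 2 := by
  have htL : 0 < t * L := mul_pos ht hL
  have hKL : 0 < K * L := mul_pos ((div_pos two_pos htL).trans hK) hL
  refine (inv_anti₀ hKL hI).trans_lt ?_
  rw [inv_lt_comm₀ hKL (half_pos ht), inv_div, div_lt_iff₀ ht]
  rw [div_lt_iff₀ htL] at hK
  linarith

/-- deterministic Morton-type blow-up. If `f₀` is continuous on `[0,T*]`,
`0 < t < S ≤ T*`, `f₀ ≥ K` on `[t,S]` and `K > 2/(t(S-t))`, then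
`η s = (∫_s^S f₀)⁻¹ - s/2` vanishes (becomes `≤ 0`) at some `s ∈ (0,t]`, so the
explicit forward-rate formula blows up before time `t`. -/
theorem stmt_9 (Tstar t S K : ℝ) (f₀ : ℝ → ℝ)
    (hf₀ : ContinuousOn f₀ (Set.Icc 0 Tstar))
    (ht : 0 < t) (htS : t < S) (hST : S ≤ Tstar)
    (hK : ∀ v ∈ Set.Icc t S, K ≤ f₀ v)
    (hKbig : 2 / (t * (S - t)) < K)
    (η : ℝ → ℝ)
    (hη : ∀ s, η s = (∫ v in s..S, f₀ v)⁻¹ - s / 2) :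
    ∃ s ∈ Set.Ioc (0:ℝ) t, η s ≤ 0 := by
  refine ⟨t, ⟨ht, le_rfl⟩, ?_⟩
  have hint : IntervalIntegrable f₀ MeasureTheory.volume t S :=
    (hf₀.mono (Icc_subset_Icc ht.le hST)).intervalIntegrable_of_Icc htS.le
  rw [hη, sub_nonpos]
  exact (inv_lt_half_of_mul_le ht (sub_pos.2 htS) hKbig
    (mul_sub_le_integral_of_le_on htS.le hint hK)).le
end
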